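/- arXiv:2011.05085 — 6 statements merged into one kernel-verified Lean document; each statement's English description precedes it below -/
import Mathlib

section
/- Let V be a finite set with |V| = n ≥ 2 and let 𝒢 ⊆ 2^V be a family of sets that is proper, laminar, and complement-free (it does not contain both a set and its complement in V). Then |𝒢| ≤ 2n - 3. -/
/-!
Fix a point `v` and replace every member containing `v` by its complement. Crossing (all four
corners nonempty) is invariant under complementation, and for sets avoiding `v` it is the same as
overlapping, so the new family is still laminar; by complement-freeness no two members collapse.
This gives a laminar family of nonempty subsets of `V \ {v}`, and a laminar family of nonempty
subsets of an `m`-set, viewed as a forest under inclusion, has at most `m` leaves and hence at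
most `2m - 1` members.
-/

open Finset

/-- Two finite sets overlap if their intersection and both differences are nonempty. -/
def overlap {V : Type*} [DecidableEq V] (X Y : Finset V) : Prop :=
  (X ∩ Y).Nonempty ∧ (X \ Y).Nonempty ∧ (Y \ X).Nonempty

/-- Two shores cross if all four corner sets are nonempty. -/
def crossing {V : Type*} [DecidableEq V] [Fintype V] (X Y : Finset V) : Prop :=
  (X ∩ Y).Nonempty ∧ (X \ Y).Nonempty ∧ (Y \ X).Nonempty ∧ (Xᶜ ∩ Yᶜ).Nonempty

/-- X is the shore of a cut: nonempty and proper. -/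
def isCutShore {V : Type*} [Fintype V] (X : Finset V) : Prop :=
  X.Nonempty ∧ X ≠ Finset.univ

/-- The weight of the cut Δ(X) in the weighted graph with (symmetric) weights w. -/
noncomputable def cutWeight {V : Type*} [DecidableEq V] [Fintype V]
    (w : V → V → ℝ) (X : Finset V) : ℝ :=
  (1/2) * ∑ p : V × V,
    if (p.1 ∈ X ∧ p.2 ∉ X) ∨ (p.2 ∈ X ∧ p.1 ∉ X) then w p.1 p.2 else 0

/-- Δ(X) is a minimum cut. -/
def isMinCut {V : Type*} [DecidableEq V] [Fintype V] (w : V → V → ℝ) (X : Finset V) : Prop :=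
  isCutShore X ∧ ∀ Y : Finset V, isCutShore Y → cutWeight w X ≤ cutWeight w Y

/-- The characteristic vector of the cut Δ(X) among the edges (pairs of positive weight). -/
noncomputable def cutVec {V : Type*} [DecidableEq V] [Fintype V]
    (w : V → V → ℝ) (X : Finset V) : V × V → ℝ :=
  fun p => if (((p.1 ∈ X ∧ p.2 ∉ X) ∨ (p.2 ∈ X ∧ p.1 ∉ X)) ∧ 0 < w p.1 p.2) then 1 else 0

section Laminar

variable {V : Type*} [DecidableEq V]

theorem not_overlap_iff {X Y : Finset V} : ¬ overlap X Y ↔ X ⊆ Y ∨ Y ⊆ X ∨ Disjoint X Y := by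
  simp only [overlap, sdiff_nonempty, ← not_disjoint_iff_nonempty_inter]
  tauto

theorem subset_sdiff_of_not_overlap {U M X : Finset V} (hXU : X ⊆ U) (hXM : ¬ X ⊆ M)
    (hcard : X.card ≤ M.card) (h : ¬ overlap X M) : X ⊆ U \ M := by
  rcases not_overlap_iff.mp h with hsub | hsub | hdisj
  · exact absurd hsub hXM
  · exact absurd (eq_of_subset_of_card_le hsub hcard ▸ subset_refl X) hXM
  · exact subset_sdiff.mpr ⟨hXU, hdisj⟩

/-- The induction removes `U` itself and splits the rest along a largest member `M` into the
sets inside `M` and the sets inside `U \ M`. -/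
theorem card_le_two_mul_card_sub_one_of_laminar (U : Finset V) (H : Finset (Finset V))
    (hsub : ∀ X ∈ H, X.Nonempty ∧ X ⊆ U) (hlam : ∀ X ∈ H, ∀ Y ∈ H, ¬ overlap X Y) :
    H.card ≤ 2 * U.card - 1 := by
  induction U using Finset.strongInduction generalizing H with
  | _ U ih =>
  have hH : H.card - 1 ≤ (H.erase U).card := pred_card_le_card_erase
  rcases (H.erase U).eq_empty_or_nonempty with hempty | hne
  · rcases H.eq_empty_or_nonempty with rfl | ⟨X, hX⟩
    · simp
    · have : 0 < U.card := card_pos.mpr ((hsub X hX).1.mono (hsub X hX).2)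
      rw [hempty, card_empty] at hH
      omega
  obtain ⟨M, hM, hMmax⟩ := (H.erase U).exists_max_image card hne
  have hMH : M ∈ H := mem_of_mem_erase hM
  have hMU : M ⊂ U := ssubset_of_subset_of_ne (hsub M hMH).2 (ne_of_mem_erase hM)
  have hmemH {p : Finset V → Prop} [DecidablePred p] {X : Finset V}
      (hX : X ∈ (H.erase U).filter p) : X ∈ H :=
    mem_of_mem_erase (mem_filter.mp hX).1
  have hinner := ih M hMU ((H.erase U).filter (· ⊆ M))
    (fun X hX ↦ ⟨(hsub X (hmemH hX)).1, (mem_filter.mp hX).2⟩)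
    (fun X hX Y hY ↦ hlam X (hmemH hX) Y (hmemH hY))
  have houter := ih (U \ M) (sdiff_ssubset hMU.subset (hsub M hMH).1)
    ((H.erase U).filter (¬ · ⊆ M))
    (fun X hX ↦ ⟨(hsub X (hmemH hX)).1, subset_sdiff_of_not_overlap (hsub X (hmemH hX)).2
      (mem_filter.mp hX).2 (hMmax X (mem_filter.mp hX).1) (hlam X (hmemH hX) M hMH)⟩)
    (fun X hX Y hY ↦ hlam X (hmemH hX) Y (hmemH hY))
  have hsplit := card_filter_add_card_filter_not (s := H.erase U) (· ⊆ M)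
  have hMpos : 0 < M.card := card_pos.mpr (hsub M hMH).1
  have hMlt : M.card < U.card := card_lt_card hMU
  rw [card_sdiff_of_subset hMU.subset] at houter
  omega

end Laminar

section Crossing

variable {V : Type*} [DecidableEq V] [Fintype V]

theorem crossing_comm {X Y : Finset V} : crossing X Y ↔ crossing Y X := by
  simp only [crossing, inter_comm]
  tauto

theorem crossing_compl_left {X Y : Finset V} : crossing Xᶜ Y ↔ crossing X Y := by
  simp only [crossing, sdiff_eq_inter_compl, compl_compl, inter_comm]
  tauto

theorem not_crossing_of_not_overlap {X Y : Finset V} (h : ¬ overlap X Y) : ¬ crossing X Y :=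
  fun ⟨h₁, h₂, h₃, _⟩ ↦ h ⟨h₁, h₂, h₃⟩

theorem not_overlap_of_not_crossing {X Y : Finset V} {v : V} (hX : v ∉ X) (hY : v ∉ Y)
    (h : ¬ crossing X Y) : ¬ overlap X Y :=
  fun ⟨h₁, h₂, h₃⟩ ↦ h ⟨h₁, h₂, h₃, v, by simp [hX, hY]⟩

end Crossing

section FlipAway

variable {V : Type*} [DecidableEq V] [Fintype V]

def flipAway (v : V) (X : Finset V) : Finset V := if v ∈ X then Xᶜ else X

theorem notMem_flipAway (v : V) (X : Finset V) : v ∉ flipAway v X := by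
  unfold flipAway
  split_ifs with h <;> simp [h]

theorem flipAway_nonempty {v : V} {X : Finset V} (hne : X.Nonempty) (hnu : X ≠ univ) :
    (flipAway v X).Nonempty := by
  unfold flipAway
  split_ifs
  · simpa [nonempty_iff_ne_empty] using hnu
  · exact hne

theorem crossing_flipAway_left {v : V} {X Y : Finset V} :
    crossing (flipAway v X) Y ↔ crossing X Y := by
  unfold flipAway
  split_ifs
  · exact crossing_compl_left
  · rfl

theorem crossing_flipAway {v : V} {X Y : Finset V} :
    crossing (flipAway v X) (flipAway v Y) ↔ crossing X Y := by
  rw [crossing_flipAway_left, crossing_comm, crossing_flipAway_left, crossing_comm]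

theorem injOn_flipAway (v : V) {G : Finset (Finset V)} (hcompfree : ∀ X ∈ G, Xᶜ ∉ G) :
    Set.InjOn (flipAway v) G := by
  intro X hX Y hY hXY
  unfold flipAway at hXY
  split_ifs at hXY
  · exact compl_injective hXY
  · exact absurd (hXY ▸ hY) (hcompfree X hX)
  · exact absurd (hXY ▸ hX) (hcompfree Y hY)
  · exact hXY

end FlipAway

/-- A proper, laminar, complement-free family on an `n`-element universe (`n ≥ 2`)
has at most `2n-3` members. -/
theorem stmt1 {V : Type*} [DecidableEq V] [Fintype V] (n : ℕ) (hn : 2 ≤ n)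
    (hcard : Fintype.card V = n) (G : Finset (Finset V))
    (hproper : ∅ ∉ G ∧ Finset.univ ∉ G)
    (hlaminar : ∀ X ∈ G, ∀ Y ∈ G, ¬ overlap X Y)
    (hcompfree : ∀ X ∈ G, Xᶜ ∉ G) :
    G.card ≤ 2 * n - 3 := by
  obtain ⟨v⟩ : Nonempty V := Fintype.card_pos_iff.mp (by omega)
  have hbound := card_le_two_mul_card_sub_one_of_laminar {v}ᶜ (G.image (flipAway v))
    (by
      simp only [mem_image, forall_exists_index, and_imp, forall_apply_eq_imp_iff₂]
      intro X hX
      refine ⟨flipAway_nonempty (nonempty_iff_ne_empty.mpr ?_) ?_, ?_⟩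
      · rintro rfl; exact hproper.1 hX
      · rintro rfl; exact hproper.2 hX
      · simpa using notMem_flipAway v X)
    (by
      simp only [mem_image, forall_exists_index, and_imp, forall_apply_eq_imp_iff₂]
      intro X hX Y hY
      exact not_overlap_of_not_crossing (notMem_flipAway v X) (notMem_flipAway v Y)
        (crossing_flipAway.not.mpr (not_crossing_of_not_overlap (hlaminar X hX Y hY))))
  rw [card_image_of_injOn (injOn_flipAway v hcompfree), card_compl, card_singleton,
    hcard] at hbound
  omega
end

section
/- Let G = (V, w) be a weighted undirected graph with nonnegative edge weights, and let Δ(X), Δ(Y) be minimum cuts of G such that X and Y cross. Then the characteristic vectors (over edges of G) satisfy χ(Δ(X)) + χ(Δ(Y)) = χ(Δ(X∩Y)) + χ(Δ(X∪Y)); equivalently, there are no edges of positive weight between X\Y and Y\X. -/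
open Finset

/-!
Counting every ordered pair, `χ(Δ(X)) + χ(Δ(Y)) = χ(Δ(X∩Y)) + χ(Δ(X∪Y)) + 2χ(E(X\Y, Y\X))`,
and the same identity holds for the cut weights. When `X` and `Y` cross, `X ∩ Y` and `X ∪ Y` are
again shores, so minimality of `Δ(X)` and `Δ(Y)` forces the nonnegative weight of
`E(X\Y, Y\X)` to vanish.
-/

section Quadrangle

variable {V : Type*} [DecidableEq V] [Fintype V]

/-- The weight of `E(A, B)`, normalised like `cutWeight`. -/
noncomputable def betweenWeight (w : V → V → ℝ) (A B : Finset V) : ℝ :=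
  (1/2) * ∑ p : V × V, if (p.1 ∈ A ∧ p.2 ∈ B) ∨ (p.2 ∈ A ∧ p.1 ∈ B) then w p.1 p.2 else 0

noncomputable def betweenVec (w : V → V → ℝ) (A B : Finset V) : V × V → ℝ :=
  fun p => if ((p.1 ∈ A ∧ p.2 ∈ B) ∨ (p.2 ∈ A ∧ p.1 ∈ B)) ∧ 0 < w p.1 p.2 then 1 else 0

omit [Fintype V] in
lemma ite_cut_add_ite_cut (X Y : Finset V) (i j : V) (r : ℝ) :
    (if (i ∈ X ∧ j ∉ X) ∨ (j ∈ X ∧ i ∉ X) then r else 0) +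
      (if (i ∈ Y ∧ j ∉ Y) ∨ (j ∈ Y ∧ i ∉ Y) then r else 0) =
    (if (i ∈ X ∩ Y ∧ j ∉ X ∩ Y) ∨ (j ∈ X ∩ Y ∧ i ∉ X ∩ Y) then r else 0) +
      (if (i ∈ X ∪ Y ∧ j ∉ X ∪ Y) ∨ (j ∈ X ∪ Y ∧ i ∉ X ∪ Y) then r else 0) +
      2 * (if (i ∈ X \ Y ∧ j ∈ Y \ X) ∨ (j ∈ X \ Y ∧ i ∈ Y \ X) then r else 0) := by
  simp only [mem_inter, mem_union, mem_sdiff]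
  by_cases hiX : i ∈ X <;> by_cases hjX : j ∈ X <;> by_cases hiY : i ∈ Y <;>
    by_cases hjY : j ∈ Y <;> simp [hiX, hjX, hiY, hjY] <;> ring

lemma cutWeight_add_cutWeight (w : V → V → ℝ) (X Y : Finset V) :
    cutWeight w X + cutWeight w Y =
      cutWeight w (X ∩ Y) + cutWeight w (X ∪ Y) + 2 * betweenWeight w (X \ Y) (Y \ X) := by
  simp only [cutWeight, betweenWeight]
  rw [← mul_assoc, mul_comm 2, mul_assoc, ← mul_add, ← mul_add, ← mul_add, mul_sum,
    ← sum_add_distrib, ← sum_add_distrib, ← sum_add_distrib]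
  exact congrArg _ (sum_congr rfl fun p _ => ite_cut_add_ite_cut X Y p.1 p.2 (w p.1 p.2))

lemma cutVec_add_cutVec (w : V → V → ℝ) (X Y : Finset V) :
    cutVec w X + cutVec w Y =
      cutVec w (X ∩ Y) + cutVec w (X ∪ Y) + (2 : ℝ) • betweenVec w (X \ Y) (Y \ X) := by
  funext p
  simp only [Pi.add_apply, Pi.smul_apply, smul_eq_mul, cutVec, betweenVec, ite_and]
  exact ite_cut_add_ite_cut X Y p.1 p.2 _

lemma betweenWeight_nonneg {w : V → V → ℝ} (hnn : ∀ i j, 0 ≤ w i j) (A B : Finset V) :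
    0 ≤ betweenWeight w A B :=
  mul_nonneg (by norm_num) (sum_nonneg fun p _ => by split_ifs <;> simp [hnn])

lemma betweenWeight_eq_zero_iff {w : V → V → ℝ} (hnn : ∀ i j, 0 ≤ w i j) (A B : Finset V) :
    betweenWeight w A B = 0 ↔
      ∀ i j, (i ∈ A ∧ j ∈ B) ∨ (j ∈ A ∧ i ∈ B) → w i j = 0 := by
  rw [betweenWeight, mul_eq_zero, or_iff_right (by norm_num),
    sum_eq_zero_iff_of_nonneg fun p _ => by split_ifs <;> simp [hnn]]
  constructor
  · intro h i j hij
    simpa [hij] using h (i, j) (mem_univ _)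
  · intro h p _
    split_ifs with hp
    exacts [h p.1 p.2 hp, rfl]

omit [Fintype V] in
lemma betweenVec_eq_zero {w : V → V → ℝ} {A B : Finset V}
    (h : ∀ i j, (i ∈ A ∧ j ∈ B) ∨ (j ∈ A ∧ i ∈ B) → w i j = 0) : betweenVec w A B = 0 := by
  funext p
  simp only [betweenVec, Pi.zero_apply, ite_eq_right_iff, one_ne_zero, imp_false, not_and]
  exact fun hp hw => hw.ne' (h p.1 p.2 hp)

lemma isCutShore_inter {X : Finset V} (hX : isCutShore X) (Y : Finset V)
    (hXY : (X ∩ Y).Nonempty) : isCutShore (X ∩ Y) :=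
  ⟨hXY, fun h => hX.2 (eq_univ_of_forall fun v => (mem_inter.1 (h ▸ mem_univ v)).1)⟩

lemma isCutShore_union {X : Finset V} (hX : isCutShore X) (Y : Finset V)
    (hXY : (Xᶜ ∩ Yᶜ).Nonempty) : isCutShore (X ∪ Y) := by
  refine ⟨hX.1.mono subset_union_left, fun h => ?_⟩
  obtain ⟨v, hv⟩ := hXY
  simp_all [← compl_union]

lemma betweenWeight_eq_zero_of_isMinCut {w : V → V → ℝ} (hnn : ∀ i j, 0 ≤ w i j)
    {X Y : Finset V} (hX : isMinCut w X) (hY : isMinCut w Y)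
    (hI : isCutShore (X ∩ Y)) (hU : isCutShore (X ∪ Y)) :
    betweenWeight w (X \ Y) (Y \ X) = 0 := by
  have hsub := cutWeight_add_cutWeight w X Y
  have hle := add_le_add (hX.2 _ hI) (hY.2 _ hU)
  linarith [betweenWeight_nonneg hnn (X \ Y) (Y \ X)]

end Quadrangle

theorem stmt4_general {V : Type*} [DecidableEq V] [Fintype V] (w : V → V → ℝ)
    (hnn : ∀ i j, 0 ≤ w i j)
    (X Y : Finset V) (hX : isMinCut w X) (hY : isMinCut w Y)
    (hcross : crossing X Y) :
    cutVec w X + cutVec w Y = cutVec w (X ∩ Y) + cutVec w (X ∪ Y) ∧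
    ∀ i ∈ X \ Y, ∀ j ∈ Y \ X, w i j = 0 := by
  obtain ⟨hXY, -, -, hcompl⟩ := hcross
  have hzero : ∀ i j, (i ∈ X \ Y ∧ j ∈ Y \ X) ∨ (j ∈ X \ Y ∧ i ∈ Y \ X) → w i j = 0 :=
    (betweenWeight_eq_zero_iff hnn _ _).1 <| betweenWeight_eq_zero_of_isMinCut hnn hX hY
      (isCutShore_inter hX.1 Y hXY) (isCutShore_union hX.1 Y hcompl)
  refine ⟨?_, fun i hi j hj => hzero i j (Or.inl ⟨hi, hj⟩)⟩
  rw [cutVec_add_cutVec, betweenVec_eq_zero hzero, smul_zero, add_zero]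

/-- Lemma on a quadrangle: for crossing minimum cuts `Δ(X)`, `Δ(Y)`,
`χ(Δ(X)) + χ(Δ(Y)) = χ(Δ(X∩Y)) + χ(Δ(X∪Y))`; equivalently there are no
edges of positive weight between `X \ Y` and `Y \ X`. -/
theorem stmt4 {V : Type*} [DecidableEq V] [Fintype V] (w : V → V → ℝ)
    (hsym : ∀ i j, w i j = w j i) (hnn : ∀ i j, 0 ≤ w i j)
    (X Y : Finset V) (hX : isMinCut w X) (hY : isMinCut w Y)
    (hcross : crossing X Y) :
    cutVec w X + cutVec w Y = cutVec w (X ∩ Y) + cutVec w (X ∪ Y) ∧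
    ∀ i ∈ X \ Y, ∀ j ∈ Y \ X, w i j = 0 :=
  stmt4_general w hnn X Y hX hY hcross
end

section
/- The cut dimension of the unweighted n-vertex cycle C_n for n ≥ 3 equals n: the characteristic vectors of the minimum cuts of C_n span ℝ^n. In particular, the vectors e₂+e_n, and e₁+e_k for 2 ≤ k ≤ n (standard basis vectors of ℝ^n) together span ℝ^n. -/
open Finset

/-!
A shore `X` of the `n`-cycle cuts exactly the edges `{i, i + 1}` whose endpoints it separates, and
a proper nonempty shore separates at least two of them (one where the cycle leaves `X`, one where
it enters). Hence every arc `{a + 1, …, a + k}`, which cuts only the edges at `a` and `a + k`, is a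
minimum cut. A cut vector is determined by its values on the edges `(i, i + 1)`, and these values
for the arcs `{1, …, k}` and `{0, 1}` are `e₀ + e_k` and `e₋₁ + e₁`. They span `ℝⁿ` because
`2 e₀ = (e₀ + e₁) + (e₀ + e₋₁) - (e₋₁ + e₁)`.
-/

theorem Submodule.eq_top_of_single_add_single_mem {K ι : Type*} [DivisionRing K] [Finite ι]
    [DecidableEq ι] {s : Submodule K (ι → K)} (h2 : (2 : K) ≠ 0) {a b c : ι} (hab : a ≠ b)
    (hac : a ≠ c) (hbc : Pi.single b 1 + Pi.single c 1 ∈ s)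
    (ha : ∀ k, k ≠ a → Pi.single a 1 + Pi.single k 1 ∈ s) : s = ⊤ := by
  have hsa : Pi.single a (1 : K) ∈ s := by
    rw [← s.smul_mem_iff h2]
    have key : (2 : K) • Pi.single a (1 : K) = (Pi.single a 1 + Pi.single b 1)
        + (Pi.single a 1 + Pi.single c 1) - (Pi.single b 1 + Pi.single c 1) := by
      rw [two_smul]; abel
    rw [key]
    exact s.sub_mem (s.add_mem (ha b hab.symm) (ha c hac.symm)) hbc
  have hs : ∀ k, Pi.single k (1 : K) ∈ s := by
    intro k
    rcases eq_or_ne k a with rfl | hk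
    · exact hsa
    · simpa using s.sub_mem (ha k hk) hsa
  rw [eq_top_iff, ← (Pi.basisFun K ι).span_eq, Submodule.span_le]
  rintro _ ⟨k, rfl⟩
  simpa using hs k

section Cuts

variable {V : Type*} [DecidableEq V] [Fintype V]

def minCutSpan (w : V → V → ℝ) : Submodule ℝ (V × V → ℝ) :=
  Submodule.span ℝ {v | ∃ X : Finset V, isMinCut w X ∧ v = cutVec w X}

theorem cutVec_swap {w : V → V → ℝ} (hw : ∀ i j, w i j = w j i) (X : Finset V) (i j : V) :
    cutVec w X (j, i) = cutVec w X (i, j) := by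
  simp only [cutVec, hw j i, or_comm]

theorem cutVec_eq_zero_of_nonpos {w : V → V → ℝ} (X : Finset V) {i j : V} (h : w i j ≤ 0) :
    cutVec w X (i, j) = 0 := by
  simp [cutVec, h.not_gt]

end Cuts

namespace ZMod

variable {n : ℕ}

theorem natCast_ne_zero_of_lt {k : ℕ} (hk0 : 0 < k) (hkn : k < n) : (k : ZMod n) ≠ 0 := by
  rw [Ne, ← val_eq_zero, val_natCast_of_lt hkn]
  exact hk0.ne'

theorem one_ne_zero_of_one_lt (hn : 1 < n) : (1 : ZMod n) ≠ 0 := by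
  simpa using natCast_ne_zero_of_lt one_pos hn

variable [NeZero n]

theorem eq_natCast_iff_val_eq {k : ℕ} (hkn : k < n) (x : ZMod n) : x = k ↔ x.val = k :=
  ⟨fun h => h ▸ val_natCast_of_lt hkn, fun h => by rw [← h, natCast_zmod_val]⟩

theorem val_add_one_eq (hn : n ≠ 1) (x : ZMod n) :
    (x + 1).val = if x.val + 1 = n then 0 else x.val + 1 := by
  rw [val_add, val_one'' hn]
  have := x.val_lt
  split_ifs with h
  · rw [h, Nat.mod_self]
  · exact Nat.mod_eq_of_lt (by omega)

theorem exists_mem_add_one_notMem {s : Finset (ZMod n)} {a b : ZMod n} (ha : a ∈ s)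
    (hb : b ∉ s) : ∃ i ∈ s, i + 1 ∉ s := by
  by_contra! hclosed
  have hadd : ∀ k : ℕ, a + k ∈ s := by
    intro k
    induction k with
    | zero => simpa using ha
    | succ k ih => simpa [add_assoc] using hclosed _ ih
  exact hb (by simpa using hadd (b - a).val)

end ZMod

namespace CycleGraph

variable {n : ℕ}

def weight (n : ℕ) : ZMod n → ZMod n → ℝ :=
  fun i j => if i ≠ j ∧ (j = i + 1 ∨ i = j + 1) then 1 else 0

theorem weight_comm (i j : ZMod n) : weight n i j = weight n j i := by
  simp only [weight, ne_comm, or_comm]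

variable [NeZero n]

def boundary (X : Finset (ZMod n)) : Finset (ZMod n) := {i | Xor (i ∈ X) (i + 1 ∈ X)}

theorem mem_boundary {X : Finset (ZMod n)} {i : ZMod n} :
    i ∈ boundary X ↔ Xor (i ∈ X) (i + 1 ∈ X) := by
  simp [boundary]

theorem one_lt_card_boundary {X : Finset (ZMod n)} (hX : isCutShore X) :
    1 < #(boundary X) := by
  obtain ⟨a, ha⟩ := hX.1
  obtain ⟨b, hb⟩ : ∃ b, b ∉ X := by simpa [eq_univ_iff_forall] using hX.2
  obtain ⟨i, hi, hi'⟩ := ZMod.exists_mem_add_one_notMem ha hb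
  obtain ⟨j, hj, hj'⟩ := ZMod.exists_mem_add_one_notMem (s := Xᶜ) (by simpa) (by simpa)
  rw [mem_compl] at hj
  rw [mem_compl, not_not] at hj'
  exact one_lt_card.2 ⟨i, mem_boundary.2 (.inl ⟨hi, hi'⟩), j, mem_boundary.2 (.inr ⟨hj', hj⟩),
    fun hij => hj (hij ▸ hi)⟩

theorem cutWeight_weight (hn : 3 ≤ n) (X : Finset (ZMod n)) :
    cutWeight (weight n) X = #(boundary X) := by
  have h1 : (1 : ZMod n) ≠ 0 := ZMod.one_ne_zero_of_one_lt (by omega)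
  have h2 : ∀ i : ZMod n, i ≠ i + 1 + 1 := fun i => by
    simpa [add_assoc, one_add_one_eq_two] using
      (ZMod.natCast_ne_zero_of_lt two_pos (by omega : 2 < n))
  have hsplit : ∀ i j : ZMod n, (if Xor (i ∈ X) (j ∈ X) then weight n i j else 0) =
      (if j = i + 1 ∧ i ∈ boundary X then 1 else 0) +
        (if i = j + 1 ∧ j ∈ boundary X then 1 else 0) := by
    intro i j
    by_cases hj : j = i + 1
    · subst hj
      simp [weight, mem_boundary, h1, h2]
    by_cases hi : i = j + 1
    · subst hi
      simp [weight, mem_boundary, h1, h2, _root_.xor_comm]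
    simp [weight, hi, hj]
  calc cutWeight (weight n) X
      = 1 / 2 * ∑ p : ZMod n × ZMod n, ((if p.2 = p.1 + 1 ∧ p.1 ∈ boundary X then 1 else 0) +
          (if p.1 = p.2 + 1 ∧ p.2 ∈ boundary X then 1 else 0)) :=
        congrArg _ (Finset.sum_congr rfl fun p _ => hsplit p.1 p.2)
    _ = #(boundary X) := by
        rw [sum_add_distrib, Fintype.sum_prod_type, Fintype.sum_prod_type_right]
        simp only [ite_and, sum_ite_eq', mem_univ, if_true, sum_ite_mem, univ_inter, sum_const,
          nsmul_eq_mul, mul_one]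
        ring

theorem isCutShore_of_mem_boundary {X : Finset (ZMod n)} {i : ZMod n} (hi : i ∈ boundary X) :
    isCutShore X := by
  rw [mem_boundary] at hi
  refine ⟨?_, fun hX => ?_⟩
  · rcases hi with ⟨hi, -⟩ | ⟨hi, -⟩ <;> exact ⟨_, hi⟩
  · simp [hX] at hi

theorem isMinCut_of_card_boundary_eq_two (hn : 3 ≤ n) {X : Finset (ZMod n)}
    (hX : #(boundary X) = 2) : isMinCut (weight n) X := by
  obtain ⟨i, hi⟩ := card_pos.1 (hX ▸ two_pos)
  refine ⟨isCutShore_of_mem_boundary hi, fun Y hY => ?_⟩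
  rw [cutWeight_weight hn, cutWeight_weight hn, hX]
  exact_mod_cast one_lt_card_boundary hY

def arc (a : ZMod n) (k : ℕ) : Finset (ZMod n) := {i | 1 ≤ (i - a).val ∧ (i - a).val ≤ k}

theorem boundary_arc (a : ZMod n) {k : ℕ} (hk0 : 0 < k) (hkn : k < n) :
    boundary (arc a k) = {a, a + k} := by
  ext i
  have hx := (i - a).val_lt
  have hsucc := ZMod.val_add_one_eq (by omega) (i - a)
  have h0 : i = a ↔ (i - a).val = 0 := by rw [ZMod.val_eq_zero, sub_eq_zero]
  have hk : i = a + k ↔ (i - a).val = k := by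
    rw [← ZMod.eq_natCast_iff_val_eq hkn, sub_eq_iff_eq_add']
  simp only [mem_boundary, xor_def, arc, mem_filter, mem_univ, true_and, mem_insert,
    mem_singleton, h0, hk, add_sub_right_comm i 1 a]
  rw [hsucc]
  split_ifs <;> omega

theorem isMinCut_arc (hn : 3 ≤ n) (a : ZMod n) {k : ℕ} (hk0 : 0 < k) (hkn : k < n) :
    isMinCut (weight n) (arc a k) := by
  refine isMinCut_of_card_boundary_eq_two hn ?_
  rw [boundary_arc a hk0 hkn, card_pair]
  simpa using ZMod.natCast_ne_zero_of_lt hk0 hkn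

def edgeRestrict (n : ℕ) : (ZMod n × ZMod n → ℝ) →ₗ[ℝ] (ZMod n → ℝ) :=
  LinearMap.funLeft ℝ ℝ fun i => (i, i + 1)

def edgeExtend (n : ℕ) : (ZMod n → ℝ) →ₗ[ℝ] (ZMod n × ZMod n → ℝ) :=
  LinearMap.pi fun p => if p.2 = p.1 + 1 then LinearMap.proj p.1
    else if p.1 = p.2 + 1 then LinearMap.proj p.2 else 0

theorem edgeRestrict_cutVec (hn : 1 < n) (X : Finset (ZMod n)) :
    edgeRestrict n (cutVec (weight n) X) = ∑ i ∈ boundary X, Pi.single i 1 := by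
  have h1 : (1 : ZMod n) ≠ 0 := ZMod.one_ne_zero_of_one_lt hn
  ext i
  simp [edgeRestrict, cutVec, weight, Finset.sum_apply, Pi.single_apply, mem_boundary, xor_def, h1]

theorem edgeExtend_edgeRestrict_cutVec (X : Finset (ZMod n)) :
    edgeExtend n (edgeRestrict n (cutVec (weight n) X)) = cutVec (weight n) X := by
  ext ⟨i, j⟩
  simp only [edgeExtend, LinearMap.pi_apply]
  split_ifs with hj hi
  · subst hj; rfl
  · subst hi; exact cutVec_swap weight_comm X _ _
  · have : weight n i j = 0 := by simp [weight, hi, hj]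
    exact (cutVec_eq_zero_of_nonpos X this.le).symm

theorem single_add_single_mem_map_minCutSpan (hn : 3 ≤ n) (a : ZMod n) {k : ℕ} (hk0 : 0 < k)
    (hkn : k < n) :
    Pi.single a 1 + Pi.single (a + k) 1 ∈ (minCutSpan (weight n)).map (edgeRestrict n) := by
  have hak : a ≠ a + k := by simpa using ZMod.natCast_ne_zero_of_lt hk0 hkn
  have himage := edgeRestrict_cutVec (by omega) (arc a k)
  rw [boundary_arc a hk0 hkn, sum_pair hak] at himage
  exact himage ▸ Submodule.mem_map_of_mem
    (Submodule.subset_span ⟨arc a k, isMinCut_arc hn a hk0 hkn, rfl⟩)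

theorem map_minCutSpan_eq_top (hn : 3 ≤ n) :
    (minCutSpan (weight n)).map (edgeRestrict n) = ⊤ := by
  have h1 : (1 : ZMod n) ≠ 0 := ZMod.one_ne_zero_of_one_lt (by omega)
  refine Submodule.eq_top_of_single_add_single_mem two_ne_zero (a := 0) (b := -1) (c := 1)
    (by simpa using h1) h1.symm ?_ fun k hk => ?_
  · simpa [neg_add_eq_sub, (by norm_num : (2 : ZMod n) - 1 = 1)] using
      single_add_single_mem_map_minCutSpan hn (-1) two_pos (by omega)
  · simpa using single_add_single_mem_map_minCutSpan hn 0 (k.val_pos.2 hk) k.val_lt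

theorem minCutSpan_le_range_edgeExtend :
    minCutSpan (weight n) ≤ LinearMap.range (edgeExtend n) :=
  Submodule.span_le.2 fun _ ⟨X, _, hv⟩ => ⟨_, hv ▸ edgeExtend_edgeRestrict_cutVec X⟩

theorem finrank_minCutSpan_weight (hn : 3 ≤ n) :
    Module.finrank ℝ (minCutSpan (weight n)) = n := by
  apply le_antisymm
  · calc Module.finrank ℝ (minCutSpan (weight n))
        ≤ Module.finrank ℝ (LinearMap.range (edgeExtend n)) :=
          Submodule.finrank_mono minCutSpan_le_range_edgeExtend
      _ ≤ Module.finrank ℝ (ZMod n → ℝ) := LinearMap.finrank_range_le _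
      _ = n := by rw [Module.finrank_fintype_fun_eq_card, ZMod.card]
  · calc n = Module.finrank ℝ ((minCutSpan (weight n)).map (edgeRestrict n)) := by
          rw [map_minCutSpan_eq_top hn, finrank_top, Module.finrank_fintype_fun_eq_card, ZMod.card]
      _ ≤ Module.finrank ℝ (minCutSpan (weight n)) := Submodule.finrank_map_le _ _

end CycleGraph

/-- The cut dimension of the unit-weight `n`-cycle (`n ≥ 3`) equals `n`: the characteristic
vectors of its minimum cuts span a space of dimension `n`.  In particular the vectors
`e₂ + eₙ` and `e₁ + e_k` (`2 ≤ k ≤ n`) span `ℝⁿ`. -/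
theorem stmt5 (n : ℕ) (hn : 3 ≤ n) [NeZero n] :
    Module.finrank ℝ (Submodule.span ℝ
      {v : ZMod n × ZMod n → ℝ | ∃ X : Finset (ZMod n),
        isMinCut (fun i j => if i ≠ j ∧ (j = i + 1 ∨ i = j + 1) then (1:ℝ) else 0) X ∧
        v = cutVec (fun i j => if i ≠ j ∧ (j = i + 1 ∨ i = j + 1) then (1:ℝ) else 0) X}) = n
    ∧ Submodule.span ℝ
        ({(fun i : Fin n => if i = (⟨1, by omega⟩ : Fin n) then (1:ℝ) else 0) +
            (fun i : Fin n => if i = (⟨n - 1, by omega⟩ : Fin n) then (1:ℝ) else 0)} ∪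
          {v : Fin n → ℝ | ∃ k : Fin n, 1 ≤ (k : ℕ) ∧
            v = (fun i : Fin n => if i = (⟨0, by omega⟩ : Fin n) then (1:ℝ) else 0) +
              (fun i : Fin n => if i = k then (1:ℝ) else 0)}) = ⊤ := by
  refine ⟨CycleGraph.finrank_minCutSpan_weight hn, ?_⟩
  have hsingle : ∀ j : Fin n, (fun i => if i = j then (1 : ℝ) else 0) = Pi.single j 1 :=
    fun j => funext fun i => (Pi.single_apply j 1 i).symm
  simp only [hsingle]
  refine Submodule.eq_top_of_single_add_single_mem two_ne_zero
    (by simp [Fin.ext_iff]) (by simp [Fin.ext_iff]; omega)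
    (Submodule.subset_span (.inl rfl)) fun k hk => Submodule.subset_span (.inr ⟨k, ?_, rfl⟩)
  exact Nat.one_le_iff_ne_zero.2 fun h => hk (Fin.ext h)
end

section
/- Let T be an arborescence with root r, ψ : E(T) → ℝ, U a finite set, and φ : U → V(T), such that: (1) r is labeled (is in the image of φ) and has out-degree 1; (2) every internal vertex is unlabeled and has out-degree 2; (3) every leaf is labeled; (4) for every s, t ∈ U the sum of ψ(e) over the edges on the undirected path from φ(s) to φ(t) is 0. Then ψ is identically 0. -/
/-!
Write `f v` for the sum of `ψ` over the root path `P v`. Because the root is labeled and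
`P r = ∅`, the path condition between a labeled vertex and the root gives `f (φ u) = 0`, and then
the condition between two labeled vertices gives that `ψ` sums to zero on `P (φ s) ∩ P (φ t)`.
Every root path is such an intersection: `P (φ u) = P (φ u) ∩ P (φ u)` for labeled vertices, and an
unlabeled vertex `v ≠ r` is internal, so it has two children, each with a labeled descendant
(the tree is finite and leaves are labeled), and the root paths of these descendants part at `v`.
Hence `f` vanishes identically and `ψ v = f v - f (p v) = 0`.
-/

open Finset

theorem Finset.sum_sdiff_union_sdiff_add_two_nsmul {ι β : Type*} [DecidableEq ι]
    [AddCommMonoid β] (s t : Finset ι) (f : ι → β) :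
    ∑ i ∈ (s \ t) ∪ (t \ s), f i + 2 • ∑ i ∈ s ∩ t, f i = ∑ i ∈ s, f i + ∑ i ∈ t, f i := by
  rw [sum_union disjoint_sdiff_sdiff, ← sum_inter_add_sum_sdiff s t f,
    ← sum_inter_add_sum_sdiff t s f, inter_comm t s, two_nsmul]
  abel

namespace ParentMap

variable {α : Type*} {p : α → α} {r : α}

theorem eq_root_of_iterate_eq_self (hp : p r = r) (hreach : ∀ v, ∃ k, p^[k] v = r)
    {v : α} {m : ℕ} (hm : m ≠ 0) (hv : p^[m] v = v) : v = r := by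
  obtain ⟨k, hk⟩ := hreach v
  calc v = p^[k * m] v := ((Function.IsPeriodicPt.const_mul hv k).eq).symm
    _ = p^[k * m - k] (p^[k] v) := by
        rw [← Function.iterate_add_apply, Nat.sub_add_cancel (Nat.le_mul_of_pos_right k
          (Nat.pos_of_ne_zero hm))]
    _ = r := by rw [hk, Function.iterate_fixed hp]

theorem exists_iterate_comparable {x u w : α} {a b : ℕ} (hu : p^[a] x = u) (hw : p^[b] x = w) :
    (∃ k, p^[k] u = w) ∨ ∃ k, p^[k] w = u := by
  rcases le_total a b with hab | hba
  · exact Or.inl ⟨b - a, by rw [← hu, ← Function.iterate_add_apply, Nat.sub_add_cancel hab, hw]⟩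
  · exact Or.inr ⟨a - b, by rw [← hw, ← Function.iterate_add_apply, Nat.sub_add_cancel hba, hu]⟩

theorem eq_of_iterate_sibling (hp : p r = r) (hreach : ∀ v, ∃ k, p^[k] v = r)
    {v c₁ c₂ : α} (hv : v ≠ r) (hc₁ : p c₁ = v) (hc₂ : p c₂ = v) {k : ℕ}
    (hk : p^[k] c₁ = c₂) : c₁ = c₂ := by
  rcases k with _ | k
  · exact hk
  · refine absurd (eq_root_of_iterate_eq_self hp hreach k.succ_ne_zero ?_) hv
    rw [← hc₁, ← Function.iterate_succ_apply, Function.iterate_succ_apply', hk, hc₂, hc₁]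

theorem iterate_cases_of_parent {x c w : α} {j a : ℕ} (hx : p^[j] x = c) (hw : p^[a] x = w) :
    (∃ k, p^[k] w = c) ∨ ∃ k, p^[k] (p c) = w := by
  rcases exists_iterate_comparable hx hw with ⟨_ | k, hk⟩ | hk
  · exact Or.inl ⟨0, hk.symm⟩
  · exact Or.inr ⟨k, by rwa [← Function.iterate_succ_apply]⟩
  · exact Or.inl hk

theorem wellFounded_child [Finite α] (hp : p r = r) (hreach : ∀ v, ∃ k, p^[k] v = r) :
    WellFounded fun c v => p c = v ∧ c ≠ r := by
  let IsStrictDescendant : α → α → Prop := fun c v => c ≠ r ∧ ∃ j, p^[j + 1] c = v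
  have : IsTrans α IsStrictDescendant := ⟨fun a b c ⟨ha, i, hab⟩ ⟨_, j, hbc⟩ =>
    ⟨ha, j + 1 + i, by rw [← hbc, ← hab, ← Function.iterate_add_apply]; rfl⟩⟩
  have : Std.Irrefl IsStrictDescendant :=
    ⟨fun a ⟨ha, j, hj⟩ => ha (eq_root_of_iterate_eq_self hp hreach j.succ_ne_zero hj)⟩
  exact Subrelation.wf (fun ⟨hc, hcr⟩ => ⟨hcr, 0, hc⟩)
    (Finite.wellFounded_of_trans_of_irrefl IsStrictDescendant)

theorem exists_iterate_labeled [Finite α] {U : Type*} {φ : U → α} (hp : p r = r)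
    (hreach : ∀ v, ∃ k, p^[k] v = r) (hrootlab : ∃ u, φ u = r)
    (hleaf : ∀ v, v ≠ r → (¬ ∃ c, p c = v ∧ c ≠ r) → ∃ u, φ u = v) (v : α) :
    ∃ u j, p^[j] (φ u) = v := by
  induction v using (wellFounded_child hp hreach).induction with | _ v ih
  by_cases hlab : ∃ u, φ u = v
  · obtain ⟨u, hu⟩ := hlab
    exact ⟨u, 0, hu⟩
  have hv : v ≠ r := by
    rintro rfl
    exact hlab hrootlab
  obtain ⟨c, hc⟩ := not_not.mp (mt (hleaf v hv) hlab)
  obtain ⟨u, j, hj⟩ := ih c hc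
  exact ⟨u, j + 1, by rw [Function.iterate_succ_apply', hj, hc.1]⟩

section RootPath

variable [DecidableEq α] {P : α → Finset α}

theorem mem_rootPath_iff (hp : p r = r) (hreach : ∀ v, ∃ k, p^[k] v = r) (hP0 : P r = ∅)
    (hPs : ∀ v, v ≠ r → P v = insert v (P (p v))) (v w : α) :
    w ∈ P v ↔ w ≠ r ∧ ∃ j, p^[j] v = w := by
  obtain ⟨k, hk⟩ := hreach v
  induction k generalizing v with
  | zero =>
    obtain rfl : v = r := hk
    simp only [hP0, notMem_empty, Function.iterate_fixed hp, false_iff, not_and]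
    exact fun hw ⟨_, hj⟩ => hw hj.symm
  | succ k ih =>
    by_cases hv : v = r
    · exact hv ▸ ih r (Function.iterate_fixed hp k)
    rw [hPs v hv, mem_insert, ih (p v) hk]
    constructor
    · rintro (rfl | ⟨hw, j, hj⟩)
      · exact ⟨hv, 0, rfl⟩
      · exact ⟨hw, j + 1, hj⟩
    · rintro ⟨hw, _ | j, hj⟩
      · exact Or.inl hj.symm
      · exact Or.inr ⟨hw, j, hj⟩

theorem notMem_rootPath_parent (hp : p r = r) (hreach : ∀ v, ∃ k, p^[k] v = r) (hP0 : P r = ∅)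
    (hPs : ∀ v, v ≠ r → P v = insert v (P (p v))) {v : α} (hv : v ≠ r) : v ∉ P (p v) := by
  rw [mem_rootPath_iff hp hreach hP0 hPs]
  exact fun ⟨_, j, hj⟩ => hv (eq_root_of_iterate_eq_self hp hreach j.succ_ne_zero hj)

theorem rootPath_inter_eq_of_sibling (hp : p r = r) (hreach : ∀ v, ∃ k, p^[k] v = r)
    (hP0 : P r = ∅) (hPs : ∀ v, v ≠ r → P v = insert v (P (p v)))
    {v c₁ c₂ x₁ x₂ : α} (hv : v ≠ r) (hc₁ : p c₁ = v) (hc₂ : p c₂ = v) (hc : c₁ ≠ c₂)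
    {j₁ j₂ : ℕ} (hx₁ : p^[j₁] x₁ = c₁) (hx₂ : p^[j₂] x₂ = c₂) :
    P x₁ ∩ P x₂ = P v := by
  ext w
  simp only [mem_inter, mem_rootPath_iff hp hreach hP0 hPs]
  constructor
  · rintro ⟨⟨hw, a, ha⟩, -, b, hb⟩
    refine ⟨hw, ?_⟩
    rcases iterate_cases_of_parent hx₁ ha with ⟨k₁, hk₁⟩ | h
    · rcases iterate_cases_of_parent hx₂ hb with ⟨k₂, hk₂⟩ | h
      · exfalso
        rcases exists_iterate_comparable hk₁ hk₂ with ⟨k, hk⟩ | ⟨k, hk⟩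
        · exact hc (eq_of_iterate_sibling hp hreach hv hc₁ hc₂ hk)
        · exact hc (eq_of_iterate_sibling hp hreach hv hc₂ hc₁ hk).symm
      · exact hc₂ ▸ h
    · exact hc₁ ▸ h
  · rintro ⟨hw, k, hk⟩
    refine ⟨⟨hw, k + 1 + j₁, ?_⟩, hw, k + 1 + j₂, ?_⟩ <;>
      simp only [Function.iterate_add_apply, Function.iterate_one, *]

theorem exists_rootPath_eq_inter [Fintype α] {U : Type*} {φ : U → α} (hp : p r = r)
    (hreach : ∀ v, ∃ k, p^[k] v = r) (hP0 : P r = ∅)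
    (hPs : ∀ v, v ≠ r → P v = insert v (P (p v))) (hrootlab : ∃ u, φ u = r)
    (hbranch : ∀ v, v ≠ r → (∃ c, p c = v ∧ c ≠ r) → 1 < #{c | p c = v ∧ c ≠ r})
    (hleaf : ∀ v, v ≠ r → (¬ ∃ c, p c = v ∧ c ≠ r) → ∃ u, φ u = v) (v : α) :
    ∃ s t, P (φ s) ∩ P (φ t) = P v := by
  by_cases hlab : ∃ u, φ u = v
  · obtain ⟨u, rfl⟩ := hlab
    exact ⟨u, u, inter_self _⟩
  have hv : v ≠ r := by
    rintro rfl
    exact hlab hrootlab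
  obtain ⟨c₁, hc₁, c₂, hc₂, hc⟩ :=
    one_lt_card.mp (hbranch v hv (not_not.mp (mt (hleaf v hv) hlab)))
  simp only [mem_filter, mem_univ, true_and] at hc₁ hc₂
  obtain ⟨s, j₁, hs⟩ := exists_iterate_labeled hp hreach hrootlab hleaf c₁
  obtain ⟨t, j₂, ht⟩ := exists_iterate_labeled hp hreach hrootlab hleaf c₂
  exact ⟨s, t, rootPath_inter_eq_of_sibling hp hreach hP0 hPs hv hc₁.1 hc₂.1 hc hs ht⟩

end RootPath

end ParentMap

/-- The edge into a vertex `v ≠ r` is identified with `v`, so `P v` is the set of edges on the path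
from the root `r` to `v`, and the undirected path between two vertices is the symmetric difference
of their root paths. -/
theorem stmt7_general {α U : Type*} [DecidableEq α] [Fintype α]
    (r : α) (p : α → α) (ψ : α → ℝ) (φ : U → α) (P : α → Finset α)
    (hp : p r = r) (hreach : ∀ v, ∃ k, p^[k] v = r)
    (hP0 : P r = ∅) (hPs : ∀ v, v ≠ r → P v = insert v (P (p v)))
    (hrootlab : ∃ u, φ u = r)
    (hinternal : ∀ v : α, v ≠ r → (∃ v', p v' = v ∧ v' ≠ r) →
      (¬ ∃ u, φ u = v) ∧ (Finset.univ.filter (fun v' : α => p v' = v ∧ v' ≠ r)).card = 2)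
    (hleaf : ∀ v : α, v ≠ r → (¬ ∃ v', p v' = v ∧ v' ≠ r) → ∃ u, φ u = v)
    (hpath : ∀ s t : U,
      ∑ e ∈ (P (φ s) \ P (φ t)) ∪ (P (φ t) \ P (φ s)), ψ e = 0) :
    ∀ v : α, v ≠ r → ψ v = 0 := by
  have ⟨u₀, hu₀⟩ := hrootlab
  have sum_labeled (u : U) : ∑ e ∈ P (φ u), ψ e = 0 := by
    simpa [hu₀, hP0] using hpath u u₀
  have sum_rootPath (v : α) : ∑ e ∈ P v, ψ e = 0 := by
    obtain ⟨s, t, hst⟩ := ParentMap.exists_rootPath_eq_inter hp hreach hP0 hPs hrootlab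
      (fun v hv hc => (hinternal v hv hc).2 ▸ one_lt_two) hleaf v
    have h := sum_sdiff_union_sdiff_add_two_nsmul (P (φ s)) (P (φ t)) ψ
    rw [hpath s t, sum_labeled s, sum_labeled t, hst, two_nsmul] at h
    linarith
  intro v hv
  have h := sum_rootPath v
  rwa [hPs v hv, sum_insert (ParentMap.notMem_rootPath_parent hp hreach hP0 hPs hv),
    sum_rootPath (p v), add_zero] at h

/-- An arborescence is encoded by a parent map `p` with `p r = r` and every vertex reaching the
root `r` by iterating `p`; the edge into a non-root vertex `v` is identified with `v`, `ψ v` is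
the value on that edge, and `P v` is the set of edges on the path from the root to `v`.
If the root is labeled and has out-degree 1, every internal vertex is unlabeled with
out-degree 2, every leaf is labeled, and the sum of `ψ` over the edges of the undirected path
between any two labeled vertices vanishes, then `ψ` vanishes on every edge. -/
theorem stmt7 {α U : Type*} [DecidableEq α] [Fintype α] [Fintype U]
    (r : α) (p : α → α) (ψ : α → ℝ) (φ : U → α) (P : α → Finset α)
    (hp : p r = r) (hreach : ∀ v, ∃ k, p^[k] v = r)
    (hP0 : P r = ∅) (hPs : ∀ v, v ≠ r → P v = insert v (P (p v)))
    (hrootlab : ∃ u, φ u = r)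
    (hrootdeg : (Finset.univ.filter (fun v : α => p v = r ∧ v ≠ r)).card = 1)
    (hinternal : ∀ v : α, v ≠ r → (∃ v', p v' = v ∧ v' ≠ r) →
      (¬ ∃ u, φ u = v) ∧ (Finset.univ.filter (fun v' : α => p v' = v ∧ v' ≠ r)).card = 2)
    (hleaf : ∀ v : α, v ≠ r → (¬ ∃ v', p v' = v ∧ v' ≠ r) → ∃ u, φ u = v)
    (hpath : ∀ s t : U,
      ∑ e ∈ (P (φ s) \ P (φ t)) ∪ (P (φ t) \ P (φ s)), ψ e = 0) :
    ∀ v : α, v ≠ r → ψ v = 0 :=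
  stmt7_general r p ψ φ P hp hreach hP0 hPs hrootlab hinternal hleaf hpath
end

section
/- Let ℱ ⊆ 2^V be a family closed under overlaps (if X, Y ∈ ℱ overlap then X∩Y, X∪Y ∈ ℱ), and let 𝒢 ⊆ ℱ be a maximal laminar subfamily of ℱ. For X ∈ ℱ\𝒢 and Y ∈ 𝒢 overlapping X, we have overlap_𝒢(X∩Y) ⊊ overlap_𝒢(X) and overlap_𝒢(X∪Y) ⊊ overlap_𝒢(X), where overlap_𝒢(Z) = {W ∈ 𝒢 : W and Z overlap}. -/
/-! A member `W` of a laminar family does not overlap `Y`, so it is disjoint from `Y`, inside it,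
or contains it. In each of the three cases an overlap of `W` with `X ∩ Y` or with `X ∪ Y` is
already an overlap with `X`, while `Y` itself overlaps `X` but neither `X ∩ Y` nor `X ∪ Y`. -/

/-- Two sets overlap if their intersection and both differences are nonempty. -/
def soverlap {V : Type*} (X Y : Set V) : Prop :=
  (X ∩ Y).Nonempty ∧ (X \ Y).Nonempty ∧ (Y \ X).Nonempty

open Set

section Overlap

variable {V : Type*} {W X Y : Set V}

theorem soverlap_iff : soverlap X Y ↔ ¬Disjoint X Y ∧ ¬X ⊆ Y ∧ ¬Y ⊆ X := by
  simp only [soverlap, not_disjoint_iff_nonempty_inter, sdiff_nonempty]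

theorem soverlap.symm (h : soverlap X Y) : soverlap Y X := by
  rw [soverlap_iff, disjoint_comm] at *
  tauto

theorem not_soverlap_iff : ¬soverlap X Y ↔ Disjoint X Y ∨ X ⊆ Y ∨ Y ⊆ X := by
  rw [soverlap_iff]
  tauto

theorem not_soverlap_of_subset (h : X ⊆ Y) : ¬soverlap X Y :=
  not_soverlap_iff.2 (.inr (.inl h))

theorem not_soverlap_of_superset (h : Y ⊆ X) : ¬soverlap X Y :=
  not_soverlap_iff.2 (.inr (.inr h))

theorem soverlap_of_soverlap_inter (hWY : ¬soverlap W Y) (hYX : ¬Y ⊆ X)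
    (h : soverlap W (X ∩ Y)) : soverlap W X := by
  rw [soverlap_iff] at h ⊢
  obtain ⟨hmeet, hWXY, hXYW⟩ := h
  refine ⟨fun hd => hmeet (hd.mono_right inter_subset_left), fun hWX => ?_,
    fun hXW => hXYW (inter_subset_left.trans hXW)⟩
  rcases not_soverlap_iff.1 hWY with hd | hWY | hYW
  · exact hmeet (hd.mono_right inter_subset_right)
  · exact hWXY (subset_inter hWX hWY)
  · exact hYX (hYW.trans hWX)

theorem soverlap_of_soverlap_union (hWY : ¬soverlap W Y) (hXY : ¬Disjoint X Y)
    (h : soverlap W (X ∪ Y)) : soverlap W X := by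
  rw [soverlap_iff] at h ⊢
  obtain ⟨hmeet, hWXY, hXYW⟩ := h
  have hWX : ¬W ⊆ X := fun hWX => hWXY (hWX.trans subset_union_left)
  rcases not_soverlap_iff.1 hWY with hd | hWY | hYW
  · exact ⟨fun hWX' => hmeet (disjoint_union_right.2 ⟨hWX', hd⟩), hWX,
      fun hXW => hXY (hd.mono_left hXW)⟩
  · exact absurd (hWY.trans subset_union_right) hWXY
  · exact ⟨fun hd => hXY (hd.symm.mono_right hYW), hWX,
      fun hXW => hXYW (union_subset hXW hYW)⟩

end Overlap

theorem sep_ssubset_sep {α : Type*} {G : Set α} {p q : α → Prop} {y : α}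
    (hpq : ∀ w ∈ G, p w → q w) (hyG : y ∈ G) (hqy : q y) (hpy : ¬p y) :
    {w ∈ G | p w} ⊂ {w ∈ G | q w} :=
  ⟨fun w hw => ⟨hw.1, hpq w hw.1 hw.2⟩, fun h => hpy (h ⟨hyG, hqy⟩).2⟩

theorem stmt12_general {V : Type*} (G : Set (Set V))
    (hlaminar : ∀ X ∈ G, ∀ Y ∈ G, ¬ soverlap X Y)
    (X : Set V)
    (Y : Set V) (hYG : Y ∈ G) (hXY : soverlap X Y) :
    {W ∈ G | soverlap W (X ∩ Y)} ⊂ {W ∈ G | soverlap W X} ∧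
    {W ∈ G | soverlap W (X ∪ Y)} ⊂ {W ∈ G | soverlap W X} := by
  obtain ⟨hXY_meet, -, hYX⟩ := soverlap_iff.1 hXY
  constructor
  · exact sep_ssubset_sep
      (fun W hW => soverlap_of_soverlap_inter (hlaminar W hW Y hYG) hYX) hYG hXY.symm
      (not_soverlap_of_superset inter_subset_right)
  · exact sep_ssubset_sep
      (fun W hW => soverlap_of_soverlap_union (hlaminar W hW Y hYG) hXY_meet) hYG hXY.symm
      (not_soverlap_of_subset subset_union_right)

/-- Jain's uncrossing lemma on overlaps: for a family `F` closed under overlaps, a maximal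
laminar subfamily `G`, `X ∈ F \ G` and `Y ∈ G` overlapping `X`, the members of `G`
overlapping `X ∩ Y` (resp. `X ∪ Y`) form a strict subset of those overlapping `X`. -/
theorem stmt12 {V : Type*} (F G : Set (Set V))
    (hclosed : ∀ X ∈ F, ∀ Y ∈ F, soverlap X Y → X ∩ Y ∈ F ∧ X ∪ Y ∈ F)
    (hGF : G ⊆ F)
    (hlaminar : ∀ X ∈ G, ∀ Y ∈ G, ¬ soverlap X Y)
    (hmaximal : ∀ X ∈ F, X ∉ G → ∃ Y ∈ G, soverlap X Y)
    (X : Set V) (hXF : X ∈ F) (hXG : X ∉ G)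
    (Y : Set V) (hYG : Y ∈ G) (hXY : soverlap X Y) :
    {W ∈ G | soverlap W (X ∩ Y)} ⊂ {W ∈ G | soverlap W X} ∧
    {W ∈ G | soverlap W (X ∪ Y)} ⊂ {W ∈ G | soverlap W X} :=
  stmt12_general G hlaminar X Y hYG hXY
end

section
/- For every α > 1 and every n ≥ 3 there exists a weighted complete graph G on n vertices such that the characteristic vectors of the α-near-mincuts of G span ℝ^{C(n,2)}, i.e., cdim_α(G) = C(n,2). Concretely, take cycle edges of weight 1 and all other pairs of weight ε = 2(α−1)/C(n,2). -/
/-!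
Give the cycle `0 — 1 — ⋯ — (n-1) — 0` weight one and add a small weight `ε` on every pair.
Every cut crosses at least two cycle edges, so `λ ≥ 2`, whereas a cut whose shore is an arc
crosses exactly two of them and costs at most `2 + ε n² / 2 ≤ 2α`: every arc is an
`α`-near-mincut. For `a ≠ b` let `A` be the arc strictly between them; then `A`, `A + a`,
`A + b`, `A + a + b` are arcs and `δ(A + a) + δ(A + b) - δ(A) - δ(A + a + b) = 2 χ_{ab}`.
So the span of the near-mincut vectors contains every pair vector `χ_{ab}`, and it is
contained in their span, which has dimension `C(n, 2)`.
-/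

open Finset

section CutSpace

variable {V : Type*} [DecidableEq V]

noncomputable def edgeVec (z : Sym2 V) : V × V → ℝ :=
  fun p => if s(p.1, p.2) = z then 1 else 0

lemma edgeVec_eq_funLeft (z : Sym2 V) :
    edgeVec z = LinearMap.funLeft ℝ ℝ (Function.uncurry Sym2.mk) (Pi.single z 1 : Sym2 V → ℝ) := by
  funext p
  simp [edgeVec, Pi.single_apply, Function.uncurry]

variable [Fintype V]

lemma linearIndependent_edgeVec :
    LinearIndependent ℝ fun z : {z : Sym2 V // ¬z.IsDiag} => edgeVec z.1 := by
  have hsingle : LinearIndependent ℝ fun z : {z : Sym2 V // ¬z.IsDiag} =>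
      (Pi.single z.1 1 : Sym2 V → ℝ) := by
    simpa only [Function.comp_def, Pi.basisFun_apply] using
      (Pi.basisFun ℝ (Sym2 V)).linearIndependent.comp _ Subtype.val_injective
  simp_rw [edgeVec_eq_funLeft]
  exact hsingle.map' _ (LinearMap.ker_eq_bot.mpr <|
    LinearMap.funLeft_injective_of_surjective ℝ ℝ _ Sym2.mk_surjective)

lemma mem_span_edgeVec {f : V × V → ℝ} (hsymm : ∀ a b, f (a, b) = f (b, a))
    (hdiag : ∀ a, f (a, a) = 0) :
    f ∈ Submodule.span ℝ (Set.range fun z : {z : Sym2 V // ¬z.IsDiag} => edgeVec z.1) := by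
  set g : Sym2 V → ℝ := Sym2.lift ⟨fun a b => f (a, b), hsymm⟩
  have hf : f = ∑ z : {z : Sym2 V // ¬z.IsDiag}, g z • edgeVec z.1 := by
    funext ⟨a, b⟩
    by_cases hab : a = b
    · subst hab
      simp only [edgeVec, hdiag, Finset.sum_apply, Pi.smul_apply, smul_eq_mul, mul_ite, mul_one,
        mul_zero]
      exact (Finset.sum_eq_zero fun z _ =>
        if_neg fun h => z.2 (h ▸ Sym2.mk_isDiag_iff.mpr rfl)).symm
    · rw [Finset.sum_apply, Fintype.sum_eq_single ⟨s(a, b), by simpa using hab⟩]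
      · simp [edgeVec, g]
      · rintro ⟨z, hz⟩ hne
        simp only [Pi.smul_apply, edgeVec, smul_eq_mul]
        rw [if_neg fun h => hne (Subtype.ext h.symm), mul_zero]
  rw [hf]
  exact Submodule.sum_mem _ fun z _ => Submodule.smul_mem _ _ (Submodule.subset_span ⟨z, rfl⟩)

lemma isCutShore_compl {X : Finset V} (hX : isCutShore X) : isCutShore Xᶜ :=
  ⟨(Finset.compl_ne_univ_iff_nonempty Xᶜ).mp (by rw [compl_compl]; exact hX.2),
    (Finset.compl_ne_univ_iff_nonempty X).mpr hX.1⟩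

variable {w : V → V → ℝ}

lemma cutVec_apply (hw : ∀ i j, i ≠ j → 0 < w i j) (X : Finset V) (p : V × V) :
    cutVec w X p = if Xor (p.1 ∈ X) (p.2 ∈ X) then 1 else 0 := by
  by_cases hp : Xor (p.1 ∈ X) (p.2 ∈ X)
  · have hne : p.1 ≠ p.2 := fun h => by simp [h] at hp
    simp only [cutVec, if_pos hp]
    exact if_pos ⟨hp, hw _ _ hne⟩
  · simp only [cutVec, if_neg hp]
    exact if_neg fun h => hp h.1

lemma cutVec_mem_span_edgeVec (hw : ∀ i j, i ≠ j → 0 < w i j) (X : Finset V) :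
    cutVec w X ∈
      Submodule.span ℝ (Set.range fun z : {z : Sym2 V // ¬z.IsDiag} => edgeVec z.1) :=
  mem_span_edgeVec (fun a b => by simp only [cutVec_apply hw, xor_comm])
    (fun a => by simp [cutVec_apply hw])

lemma cutVec_eq_zero_of_not_isCutShore {X : Finset V} (hX : ¬isCutShore X) : cutVec w X = 0 := by
  rcases not_and_or.mp hX with hX | hX
  · funext p
    simp [cutVec, Finset.not_nonempty_iff_eq_empty.mp hX]
  · funext p
    simp [cutVec, not_not.mp hX]

lemma edgeVec_eq_smul_cutVec (hw : ∀ i j, i ≠ j → 0 < w i j) {a b : V} {A : Finset V}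
    (hab : a ≠ b) (ha : a ∉ A) (hb : b ∉ A) :
    edgeVec s(a, b) = (1 / 2 : ℝ) • (cutVec w (insert a A) + cutVec w (insert b A)
      - cutVec w A - cutVec w (insert a (insert b A))) := by
  funext ⟨u, v⟩
  simp only [Pi.smul_apply, Pi.add_apply, Pi.sub_apply, cutVec_apply hw, edgeVec, Sym2.eq_iff,
    Finset.mem_insert, Xor, smul_eq_mul]
  by_cases hua : u = a <;> by_cases hub : u = b <;> by_cases hva : v = a <;>
    by_cases hvb : v = b <;> by_cases huA : u ∈ A <;> by_cases hvA : v ∈ A <;>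
    simp_all <;> norm_num

lemma cutWeight_add (w₁ w₂ : V → V → ℝ) (X : Finset V) :
    cutWeight (w₁ + w₂) X = cutWeight w₁ X + cutWeight w₂ X := by
  simp only [cutWeight, ← mul_add, ← Finset.sum_add_distrib, Pi.add_apply]
  congr 1
  refine Finset.sum_congr rfl fun p _ => ?_
  split_ifs <;> simp

lemma cutWeight_nonneg (hw : ∀ i j, 0 ≤ w i j) (X : Finset V) : 0 ≤ cutWeight w X :=
  mul_nonneg (by norm_num) <| Finset.sum_nonneg fun p _ => by split_ifs <;> simp [hw]

lemma cutWeight_const_le {c : ℝ} (hc : 0 ≤ c) (X : Finset V) :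
    cutWeight (fun _ _ => c) X ≤ c * Fintype.card V ^ 2 / 2 := by
  calc cutWeight (fun _ _ => c) X
      = 1 / 2 * ∑ p : V × V, (if Xor (p.1 ∈ X) (p.2 ∈ X) then c else 0) := rfl
    _ ≤ 1 / 2 * ∑ _p : V × V, c := by gcongr with p; split_ifs <;> simp [hc]
    _ = c * Fintype.card V ^ 2 / 2 := by simp; ring

lemma finrank_span_eq_choose_two {S : Set (V × V → ℝ)}
    (hS : S ⊆ Submodule.span ℝ (Set.range fun z : {z : Sym2 V // ¬z.IsDiag} => edgeVec z.1))
    (hE : ∀ a b, a ≠ b → edgeVec s(a, b) ∈ Submodule.span ℝ S) :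
    Module.finrank ℝ (Submodule.span ℝ S) = (Fintype.card V).choose 2 := by
  have hspan : Submodule.span ℝ S = Submodule.span ℝ
      (Set.range fun z : {z : Sym2 V // ¬z.IsDiag} => edgeVec z.1) := by
    refine le_antisymm (Submodule.span_le.mpr hS) (Submodule.span_le.mpr ?_)
    rintro _ ⟨⟨z, hz⟩, rfl⟩
    induction z using Sym2.ind with
    | h a b => exact hE a b (by simpa using hz)
  rw [hspan, finrank_span_eq_card linearIndependent_edgeVec, Sym2.card_subtype_not_diag]

end CutSpace

section Cycle

variable {n : ℕ}

def cycleWeight : ZMod n → ZMod n → ℝ :=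
  fun i j => if j = i + 1 ∨ i = j + 1 then 1 else 0

lemma cycleWeight_comm (i j : ZMod n) : cycleWeight i j = cycleWeight j i := by
  simp only [cycleWeight, or_comm]

lemma cycleWeight_nonneg (i j : ZMod n) : 0 ≤ cycleWeight i j := by
  unfold cycleWeight; split_ifs <;> norm_num

variable [NeZero n]

def cycleBoundary (X : Finset (ZMod n)) : Finset (ZMod n) :=
  {i | Xor (i ∈ X) (i + 1 ∈ X)}

lemma mem_cycleBoundary {X : Finset (ZMod n)} {i : ZMod n} :
    i ∈ cycleBoundary X ↔ Xor (i ∈ X) (i + 1 ∈ X) := by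
  simp [cycleBoundary]

lemma cutWeight_cycleWeight (hn : 3 ≤ n) (X : Finset (ZMod n)) :
    cutWeight cycleWeight X = #(cycleBoundary X) := by
  have h2 : (2 : ZMod n) ≠ 0 := by
    exact_mod_cast (ZMod.natCast_eq_zero_iff 2 n).not.mpr
      (Nat.not_dvd_of_pos_of_lt two_pos (by omega))
  set f : ZMod n → ZMod n → ℝ := fun i j => if Xor (i ∈ X) (j ∈ X) then 1 else 0
  have hsplit : ∀ i j : ZMod n, (if Xor (i ∈ X) (j ∈ X) then cycleWeight i j else 0)
      = (if j = i + 1 then f i j else 0) + (if i = j + 1 then f i j else 0) := by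
    intro i j
    by_cases hj : j = i + 1
    · have hi : i ≠ j + 1 := fun hi => h2 (by linear_combination -hj - hi)
      subst hj
      simp [cycleWeight, f, hi]
    · by_cases hx : Xor (i ∈ X) (j ∈ X) <;> simp [cycleWeight, f, hj, hx]
  have hsym : ∀ i : ZMod n, f (i + 1) i = f i (i + 1) := fun i => by simp only [f, xor_comm]
  calc cutWeight cycleWeight X
      = 1 / 2 * ∑ p : ZMod n × ZMod n,
          (if Xor (p.1 ∈ X) (p.2 ∈ X) then cycleWeight p.1 p.2 else 0) := rfl
    _ = 1 / 2 * (∑ i, f i (i + 1) + ∑ j, f (j + 1) j) := by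
      simp only [hsplit, Finset.sum_add_distrib]
      rw [Fintype.sum_prod_type, Fintype.sum_prod_type_right]
      simp
    _ = #(cycleBoundary X) := by
      simp only [hsym, cycleBoundary, Finset.natCast_card_filter, f]
      ring

lemma eq_univ_of_add_one_mem {X : Finset (ZMod n)} {v : ZMod n} (hv : v ∈ X)
    (hX : ∀ i ∈ X, i + 1 ∈ X) : X = Finset.univ := by
  have hmem : ∀ k : ℕ, v + k ∈ X := by
    intro k
    induction k with
    | zero => simpa using hv
    | succ k ih => simpa [add_assoc] using hX _ ih
  refine Finset.eq_univ_of_forall fun x => ?_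
  simpa using hmem (x - v).val

lemma exists_mem_add_one_notMem {X : Finset (ZMod n)} (hX : isCutShore X) :
    ∃ i ∈ X, i + 1 ∉ X := by
  by_contra! h
  obtain ⟨v, hv⟩ := hX.1
  exact hX.2 (eq_univ_of_add_one_mem hv h)

lemma two_le_card_cycleBoundary {X : Finset (ZMod n)} (hX : isCutShore X) :
    2 ≤ #(cycleBoundary X) := by
  obtain ⟨i, hi, hi'⟩ := exists_mem_add_one_notMem hX
  obtain ⟨j, hj, hj'⟩ := exists_mem_add_one_notMem (isCutShore_compl hX)
  rw [Finset.mem_compl] at hj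
  rw [Finset.mem_compl, not_not] at hj'
  exact Finset.one_lt_card.mpr ⟨i, mem_cycleBoundary.mpr (Or.inl ⟨hi, hi'⟩),
    j, mem_cycleBoundary.mpr (Or.inr ⟨hj', hj⟩), fun h => hj (h ▸ hi)⟩

def valIco (l r : ℕ) : Finset (ZMod n) :=
  {x | l ≤ x.val ∧ x.val < r}

lemma cycleBoundary_valIco_subset {l r : ℕ} (hr : r ≤ n) :
    cycleBoundary (valIco l r) ⊆ {(l : ZMod n) - 1, (r : ZMod n) - 1} := by
  intro i hi
  simp only [cycleBoundary, valIco, Finset.mem_filter, Finset.mem_univ, true_and] at hi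
  simp only [Finset.mem_insert, Finset.mem_singleton, eq_sub_iff_add_eq]
  have hi1 : i + 1 = ((i.val + 1 : ℕ) : ZMod n) := by simp
  rcases Nat.lt_or_ge (i.val + 1) n with hlt | hge
  · rw [hi1, ZMod.val_natCast_of_lt hlt] at hi
    have : i.val + 1 = l ∨ i.val + 1 = r := by unfold Xor at hi; omega
    rw [hi1]
    rcases this with h | h <;> simp [h]
  · have hval : i.val + 1 = n := by have := ZMod.val_lt i; omega
    rw [hi1, hval, ZMod.natCast_self] at hi ⊢
    rw [ZMod.val_zero] at hi
    have : l = 0 ∨ r = n := by unfold Xor at hi; omega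
    rcases this with h | h <;> simp [h]

lemma card_cycleBoundary_valIco_le {l r : ℕ} (hr : r ≤ n) :
    #(cycleBoundary (valIco l r : Finset (ZMod n))) ≤ 2 :=
  (Finset.card_le_card (cycleBoundary_valIco_subset hr)).trans Finset.card_le_two

lemma insert_valIco_left {a : ZMod n} {r : ℕ} (ha : a.val < r) :
    insert a (valIco (a.val + 1) r) = valIco a.val r := by
  ext x
  have : x = a ↔ x.val = a.val := (ZMod.val_injective n).eq_iff.symm
  simp only [valIco, Finset.mem_insert, Finset.mem_filter, Finset.mem_univ, true_and, this]
  omega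

lemma insert_valIco_right {b : ZMod n} {l : ℕ} (hb : l ≤ b.val) :
    insert b (valIco l b.val) = valIco l (b.val + 1) := by
  ext x
  have : x = b ↔ x.val = b.val := (ZMod.val_injective n).eq_iff.symm
  simp only [valIco, Finset.mem_insert, Finset.mem_filter, Finset.mem_univ, true_and, this]
  omega

lemma edgeVec_mem_of_cutVec_valIco_mem {w : ZMod n → ZMod n → ℝ}
    (hw : ∀ i j, i ≠ j → 0 < w i j) {M : Submodule ℝ (ZMod n × ZMod n → ℝ)}
    (hM : ∀ l r, r ≤ n → cutVec w (valIco l r) ∈ M) {a b : ZMod n} (hab : a ≠ b) :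
    edgeVec s(a, b) ∈ M := by
  wlog hlt : a.val < b.val generalizing a b
  · rw [Sym2.eq_swap]
    exact this hab.symm (lt_of_le_of_ne (not_lt.mp hlt)
      fun h => hab (ZMod.val_injective n h.symm))
  have hb := ZMod.val_lt b
  have hA : a ∉ valIco (a.val + 1) b.val ∧ b ∉ valIco (a.val + 1) b.val := by
    simp [valIco]
  rw [edgeVec_eq_smul_cutVec hw hab hA.1 hA.2, insert_valIco_left hlt,
    insert_valIco_right (Nat.succ_le_of_lt hlt), insert_valIco_left (by omega)]
  exact M.smul_mem _ <| M.sub_mem (M.sub_mem (M.add_mem (hM _ _ hb.le) (hM _ _ hb))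
    (hM _ _ hb.le)) (hM _ _ hb)

lemma cutWeight_cycleWeight_add_const (hn : 3 ≤ n) (ε : ℝ) (X : Finset (ZMod n)) :
    cutWeight (cycleWeight + fun _ _ => ε) X = #(cycleBoundary X) + cutWeight (fun _ _ => ε) X := by
  rw [cutWeight_add, cutWeight_cycleWeight hn]

lemma two_le_cutWeight_cycleWeight_add_const (hn : 3 ≤ n) {ε : ℝ} (hε : 0 ≤ ε)
    {X : Finset (ZMod n)} (hX : isCutShore X) :
    2 ≤ cutWeight (cycleWeight + fun _ _ => ε) X := by
  have : (2 : ℝ) ≤ #(cycleBoundary X) := by exact_mod_cast two_le_card_cycleBoundary hX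
  linarith [cutWeight_cycleWeight_add_const hn ε X, cutWeight_nonneg (fun _ _ => hε) X]

lemma cutWeight_cycleWeight_add_const_valIco_le (hn : 3 ≤ n) {ε : ℝ} (hε : 0 ≤ ε) {l r : ℕ}
    (hr : r ≤ n) :
    cutWeight (cycleWeight + fun _ _ => ε) (valIco l r : Finset (ZMod n)) ≤ 2 + ε * n ^ 2 / 2 := by
  have : (#(cycleBoundary (valIco l r : Finset (ZMod n))) : ℝ) ≤ 2 := by
    exact_mod_cast card_cycleBoundary_valIco_le hr
  have hconst := cutWeight_const_le hε (valIco l r : Finset (ZMod n))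
  rw [ZMod.card] at hconst
  linarith [cutWeight_cycleWeight_add_const hn ε (valIco l r)]

end Cycle

/-- For every `α > 1` and `n ≥ 3` there is a weighted complete graph on `n` vertices whose
`α`-near-mincuts have characteristic vectors spanning a space of dimension `C(n,2)`. -/
theorem stmt17 (α : ℝ) (hα : 1 < α) (n : ℕ) (hn : 3 ≤ n) [NeZero n] :
    ∃ w : ZMod n → ZMod n → ℝ,
      (∀ i j, w i j = w j i) ∧ (∀ i j, i ≠ j → 0 < w i j) ∧
      ∀ lam : ℝ,
        IsLeast {c | ∃ X : Finset (ZMod n), isCutShore X ∧ cutWeight w X = c} lam →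
        Module.finrank ℝ (Submodule.span ℝ
          {v : ZMod n × ZMod n → ℝ | ∃ X : Finset (ZMod n), isCutShore X ∧
            cutWeight w X ≤ α * lam ∧ v = cutVec w X}) = n.choose 2 := by
  set ε : ℝ := 2 * (α - 1) / n ^ 2 with hε_def
  have hε : 0 < ε := by
    have : 0 < α - 1 := by linarith
    positivity
  have hεn : ε * n ^ 2 / 2 = α - 1 := by
    have : (n : ℝ) ≠ 0 := by exact_mod_cast NeZero.ne n
    rw [hε_def]
    field_simp
  set w : ZMod n → ZMod n → ℝ := cycleWeight + fun _ _ => ε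
  have hw : ∀ i j, i ≠ j → 0 < w i j := fun i j _ =>
    add_pos_of_nonneg_of_pos (cycleWeight_nonneg i j) hε
  refine ⟨w, fun i j => by simp [w, cycleWeight_comm i j], hw, fun lam hlam => ?_⟩
  obtain ⟨X₀, hX₀, rfl⟩ := hlam.1
  have two_le_lam := two_le_cutWeight_cycleWeight_add_const hn hε.le hX₀
  rw [finrank_span_eq_choose_two ?_ ?_, ZMod.card]
  · rintro _ ⟨X, -, -, rfl⟩
    exact cutVec_mem_span_edgeVec hw X
  refine fun a b hab => edgeVec_mem_of_cutVec_valIco_mem hw (fun l r hr => ?_) hab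
  by_cases hX : isCutShore (valIco l r : Finset (ZMod n))
  · refine Submodule.subset_span ⟨_, hX, ?_, rfl⟩
    calc cutWeight w (valIco l r) ≤ 2 + ε * n ^ 2 / 2 :=
          cutWeight_cycleWeight_add_const_valIco_le hn hε.le hr
      _ = α + 1 := by rw [hεn]; ring
      _ ≤ α * 2 := by linarith
      _ ≤ α * cutWeight w X₀ := by gcongr
  · rw [cutVec_eq_zero_of_not_isCutShore hX]
    exact zero_mem _
end
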